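/- Let a,b > 0 with ab ≥ 2/9 and ab - (2/9)(a+b) ≥ 0, (a,b) ∉ {(1/3,2/3),(2/3,1/3)}. Then the function r ↦ F(a,b;a+b;r) / F(1/3,2/3;1;r) is strictly increasing on (0,1). -/

import Mathlib

/-!
If `uₙ / vₙ` is nondecreasing and not constant, with `vₙ > 0`, then `(∑ uₙ xⁿ) / (∑ vₙ xⁿ)` is
strictly increasing for `x > 0` (Biernacki–Krzyż). Indeed `A(y) B(x) - A(x) B(y)` is the double
sum of `u_m v_n (y^m x^n - x^m y^n)`, and pairing the terms `(m, n)` and `(n, m)` gives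
`(u_m v_n - u_n v_m) (y^m x^n - x^m y^n)`, a product of two factors with the sign of `m - n`.

For the zero-balanced series `F(a, b; a + b; x)` and `F(a', b'; a' + b'; x)` the coefficient
ratio `ρₙ` satisfies `ρₙ₊₁ - ρₙ = δₙ ρₙ / ((a + b + n)(a' + n)(b' + n))` with
`δₙ = (ab - a'b') n + ab (a' + b') - a'b' (a + b)`. For `a' = 1/3`, `b' = 2/3` the hypotheses say
`δₙ ≥ 0`, and `δ₁ = 0` forces `ab = 2/9`, `a + b = 1`, i.e. `{a, b} = {1/3, 2/3}`.
-/

open Set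

/-- The Gaussian hypergeometric function `F(a,b;c;x)` as a power series sum. -/
noncomputable def hyperF (a b c x : ℝ) : ℝ :=
  ∑' n : ℕ, ((ascPochhammer ℝ n).eval a * (ascPochhammer ℝ n).eval b /
    ((ascPochhammer ℝ n).eval c * (Nat.factorial n : ℝ))) * x ^ n

lemma pow_mul_pow_lt_pow_mul_pow {R : Type*} [CommRing R] [LinearOrder R] [IsStrictOrderedRing R]
    {x y : R} (hx : 0 < x) (hxy : x < y) {m n : ℕ} (hmn : m < n) :
    y ^ m * x ^ n < x ^ m * y ^ n := by
  obtain ⟨k, rfl⟩ := Nat.exists_eq_add_of_lt hmn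
  have hxy_pos : 0 < (x * y) ^ m := pow_pos (mul_pos hx (hx.trans hxy)) m
  calc y ^ m * x ^ (m + k + 1) = (x * y) ^ m * x ^ (k + 1) := by ring
    _ < (x * y) ^ m * y ^ (k + 1) := by gcongr
    _ = x ^ m * y ^ (m + k + 1) := by ring

lemma hasSum_prod_mul_of_summable {α β : Type*} {f : α → ℝ} {g : β → ℝ}
    (hf : Summable f) (hg : Summable g) :
    HasSum (fun p : α × β => f p.1 * g p.2) ((∑' i, f i) * ∑' j, g j) := by
  have hf' : Summable fun i => ‖f i‖ := hf.abs
  have hg' : Summable fun j => ‖g j‖ := hg.abs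
  rw [tsum_mul_tsum_of_summable_norm hf' hg']
  exact (summable_mul_of_summable_norm hf' hg').hasSum

lemma pos_of_hasSum_of_add_swap {α : Type*} {T : α × α → ℝ} {S : ℝ} (hT : HasSum T S)
    (hnonneg : ∀ p, 0 ≤ T p + T p.swap) (hpos : ∃ p, 0 < T p + T p.swap) : 0 < S := by
  obtain ⟨p, hp⟩ := hpos
  have hswap : HasSum (fun p : α × α => T p.swap) S := (Equiv.prodComm α α).hasSum_iff.2 hT
  have : (0 : ℝ) < S + S := hasSum_lt hnonneg hp hasSum_zero (hT.add hswap)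
  linarith

section RatioMonotone

variable {u v : ℕ → ℝ}

lemma mul_le_mul_of_monotone_div (hv : ∀ n, 0 < v n) (hρ : Monotone fun n => u n / v n)
    {m n : ℕ} (hmn : m ≤ n) : u m * v n ≤ u n * v m :=
  (div_le_div_iff₀ (hv m) (hv n)).1 (hρ hmn)

lemma cross_term_nonneg (hv : ∀ n, 0 < v n) (hρ : Monotone fun n => u n / v n)
    {x y : ℝ} (hx : 0 < x) (hxy : x < y) (m n : ℕ) :
    0 ≤ (u m * v n - u n * v m) * (y ^ m * x ^ n - x ^ m * y ^ n) := by
  rcases lt_trichotomy m n with hmn | rfl | hnm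
  · exact mul_nonneg_of_nonpos_of_nonpos
      (sub_nonpos.2 (mul_le_mul_of_monotone_div hv hρ hmn.le))
      (sub_nonpos.2 (pow_mul_pow_lt_pow_mul_pow hx hxy hmn).le)
  · simp
  · refine mul_nonneg (sub_nonneg.2 (mul_le_mul_of_monotone_div hv hρ hnm.le)) (sub_nonneg.2 ?_)
    have := pow_mul_pow_lt_pow_mul_pow hx hxy hnm
    linarith

lemma cross_term_pos (hv : ∀ n, 0 < v n) {x y : ℝ} (hx : 0 < x) (hxy : x < y) {m n : ℕ}
    (hmn : m < n) (hρ : u m / v m < u n / v n) :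
    0 < (u m * v n - u n * v m) * (y ^ m * x ^ n - x ^ m * y ^ n) :=
  mul_pos_of_neg_of_neg (sub_neg.2 ((div_lt_div_iff₀ (hv m) (hv n)).1 hρ))
    (sub_neg.2 (pow_mul_pow_lt_pow_mul_pow hx hxy hmn))

theorem strictMonoOn_tsum_div_tsum {s : Set ℝ} (hv : ∀ n, 0 < v n)
    (hρ : Monotone fun n => u n / v n) (hρ' : ∃ m n, u m / v m < u n / v n)
    (hs : ∀ x ∈ s, 0 < x) (hus : ∀ x ∈ s, Summable fun n => u n * x ^ n)
    (hvs : ∀ x ∈ s, Summable fun n => v n * x ^ n) :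
    StrictMonoOn (fun x => (∑' n, u n * x ^ n) / ∑' n, v n * x ^ n) s := by
  intro x hx y hy hxy
  have hB : ∀ z ∈ s, 0 < ∑' n, v n * z ^ n := fun z hz =>
    (hvs z hz).tsum_pos (fun n => (mul_pos (hv n) (pow_pos (hs z hz) n)).le) 0
      (by simpa using hv 0)
  rw [div_lt_div_iff₀ (hB x hx) (hB y hy), ← sub_pos]
  have hT := (hasSum_prod_mul_of_summable (hus y hy) (hvs x hx)).sub
    (hasSum_prod_mul_of_summable (hus x hx) (hvs y hy))
  have hsym : ∀ p : ℕ × ℕ,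
      (u p.1 * y ^ p.1 * (v p.2 * x ^ p.2) - u p.1 * x ^ p.1 * (v p.2 * y ^ p.2)) +
        (u p.2 * y ^ p.2 * (v p.1 * x ^ p.1) - u p.2 * x ^ p.2 * (v p.1 * y ^ p.1)) =
      (u p.1 * v p.2 - u p.2 * v p.1) * (y ^ p.1 * x ^ p.2 - x ^ p.1 * y ^ p.2) :=
    fun p => by ring
  refine pos_of_hasSum_of_add_swap hT (fun p => ?_) ?_
  · exact (cross_term_nonneg hv hρ (hs x hx) hxy p.1 p.2).trans_eq (hsym p).symm
  · obtain ⟨m, n, hmn⟩ := hρ'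
    exact ⟨(m, n), (cross_term_pos hv (hs x hx) hxy (hρ.reflect_lt hmn) hmn).trans_eq
      (hsym (m, n)).symm⟩

end RatioMonotone

lemma hyperF_eq_tsum (a b c x : ℝ) :
    hyperF a b c x = ∑' n, ordinaryHypergeometricCoefficient a b c n * x ^ n :=
  tsum_congr fun n => by ring

lemma summable_ordinaryHypergeometricCoefficient_mul_pow {a b c x : ℝ}
    (habc : ∀ k : ℕ, (k : ℝ) ≠ -a ∧ (k : ℝ) ≠ -b ∧ (k : ℝ) ≠ -c) (hx : |x| < 1) :
    Summable fun n => ordinaryHypergeometricCoefficient a b c n * x ^ n := by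
  have hx' : x ∈ Metric.eball (0 : ℝ) (ordinaryHypergeometricSeries ℝ a b c).radius := by
    rwa [ordinaryHypergeometricSeries_radius_eq_one ℝ a b c habc, Metric.mem_eball,
      edist_zero_right, Real.enorm_eq_ofReal_abs, ENNReal.ofReal_lt_one]
  simpa only [ordinaryHypergeometricSeries_apply_eq, smul_eq_mul, Real.norm_eq_abs]
    using ((ordinaryHypergeometricSeries ℝ a b c).summable_norm_apply hx').of_abs

lemma natCast_ne_neg_of_pos {a : ℝ} (ha : 0 < a) (k : ℕ) : (k : ℝ) ≠ -a :=
  ((neg_neg_of_pos ha).trans_le k.cast_nonneg).ne'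

lemma ordinaryHypergeometricCoefficient_pos {a b c : ℝ} (ha : 0 < a) (hb : 0 < b) (hc : 0 < c)
    (n : ℕ) : 0 < ordinaryHypergeometricCoefficient a b c n := by
  have := ascPochhammer_pos n a ha
  have := ascPochhammer_pos n b hb
  have := ascPochhammer_pos n c hc
  positivity

lemma ordinaryHypergeometricCoefficient_succ {a b c : ℝ} (hc : 0 < c) (n : ℕ) :
    ordinaryHypergeometricCoefficient a b c (n + 1) =
      (a + n) * (b + n) / ((c + n) * (n + 1)) * ordinaryHypergeometricCoefficient a b c n := by
  have := (ascPochhammer_pos n c hc).ne'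
  have : c + n ≠ 0 := by positivity
  simp only [ordinaryHypergeometricCoefficient, ascPochhammer_succ_eval, Nat.factorial_succ]
  push_cast
  field_simp

noncomputable def zeroBalancedCoeffRatio (a b a' b' : ℝ) (n : ℕ) : ℝ :=
  ordinaryHypergeometricCoefficient a b (a + b) n /
    ordinaryHypergeometricCoefficient a' b' (a' + b') n

section ZeroBalanced

variable {a b a' b' : ℝ} (ha : 0 < a) (hb : 0 < b) (ha' : 0 < a') (hb' : 0 < b')
include ha hb ha' hb'

lemma zeroBalancedCoeffRatio_pos (n : ℕ) : 0 < zeroBalancedCoeffRatio a b a' b' n :=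
  div_pos (ordinaryHypergeometricCoefficient_pos ha hb (by positivity) n)
    (ordinaryHypergeometricCoefficient_pos ha' hb' (by positivity) n)

lemma zeroBalancedCoeffRatio_succ_sub (n : ℕ) :
    zeroBalancedCoeffRatio a b a' b' (n + 1) - zeroBalancedCoeffRatio a b a' b' n =
      ((a * b - a' * b') * n + (a * b * (a' + b') - a' * b' * (a + b))) /
        ((a + b + n) * (a' + n) * (b' + n)) * zeroBalancedCoeffRatio a b a' b' n := by
  have := (ordinaryHypergeometricCoefficient_pos ha' hb' (by positivity) n).ne'
  simp only [zeroBalancedCoeffRatio,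
    ordinaryHypergeometricCoefficient_succ (add_pos ha hb),
    ordinaryHypergeometricCoefficient_succ (add_pos ha' hb')]
  field_simp
  ring

variable (h1 : a' * b' ≤ a * b) (h2 : a' * b' * (a + b) ≤ a * b * (a' + b'))
include h1 h2

lemma monotone_zeroBalancedCoeffRatio : Monotone (zeroBalancedCoeffRatio a b a' b') := by
  refine monotone_nat_of_le_succ fun n => sub_nonneg.1 ?_
  rw [zeroBalancedCoeffRatio_succ_sub ha hb ha' hb']
  have : 0 ≤ (a * b - a' * b') * n := mul_nonneg (sub_nonneg.2 h1) n.cast_nonneg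
  exact mul_nonneg (div_nonneg (by linarith) (by positivity))
    (zeroBalancedCoeffRatio_pos ha hb ha' hb' n).le

lemma zeroBalancedCoeffRatio_one_lt_two
    (hne : a' * b' < a * b ∨ a' * b' * (a + b) < a * b * (a' + b')) :
    zeroBalancedCoeffRatio a b a' b' 1 < zeroBalancedCoeffRatio a b a' b' 2 := by
  refine sub_pos.1 ?_
  rw [zeroBalancedCoeffRatio_succ_sub ha hb ha' hb']
  refine mul_pos (div_pos ?_ (by positivity)) (zeroBalancedCoeffRatio_pos ha hb ha' hb' 1)
  rcases hne with hne | hne <;> push_cast <;> linarith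

theorem strictMonoOn_hyperF_div_hyperF_of_zeroBalanced
    (hne : a' * b' < a * b ∨ a' * b' * (a + b) < a * b * (a' + b')) :
    StrictMonoOn (fun r => hyperF a b (a + b) r / hyperF a' b' (a' + b') r) (Ioo 0 1) := by
  have hsummable : ∀ {c d : ℝ}, 0 < c → 0 < d → ∀ x ∈ Ioo (0 : ℝ) 1,
      Summable fun n => ordinaryHypergeometricCoefficient c d (c + d) n * x ^ n :=
    fun hc hd x hx => summable_ordinaryHypergeometricCoefficient_mul_pow
      (fun k => ⟨natCast_ne_neg_of_pos hc k, natCast_ne_neg_of_pos hd k,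
        natCast_ne_neg_of_pos (add_pos hc hd) k⟩)
      (abs_lt.2 ⟨by linarith [hx.1], hx.2⟩)
  simp only [hyperF_eq_tsum]
  exact strictMonoOn_tsum_div_tsum
    (ordinaryHypergeometricCoefficient_pos ha' hb' (add_pos ha' hb'))
    (monotone_zeroBalancedCoeffRatio ha hb ha' hb' h1 h2)
    ⟨1, 2, zeroBalancedCoeffRatio_one_lt_two ha hb ha' hb' h1 h2 hne⟩
    (fun _ hx => hx.1) (hsummable ha hb) (hsummable ha' hb')

end ZeroBalanced

lemma mem_pair_of_mul_eq_of_add_eq {a b : ℝ} (hab : a * b = 2 / 9) (hsum : a + b = 1) :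
    (a, b) ∈ ({(1/3, 2/3), (2/3, 1/3)} : Set (ℝ × ℝ)) := by
  have hb : b = 1 - a := by linarith
  subst hb
  have : (3 * a - 1) * (3 * a - 2) = 0 := by linear_combination (-9) * hab
  simp only [mem_insert_iff, mem_singleton_iff, Prod.mk.injEq]
  rcases mul_eq_zero.1 this with h | h
  · left; constructor <;> linarith
  · right; constructor <;> linarith

theorem stmt_8 (a b : ℝ) (ha : 0 < a) (hb : 0 < b)
    (h1 : 2/9 ≤ a * b) (h2 : 0 ≤ a * b - (2/9) * (a + b))
    (hne : (a, b) ∉ ({(1/3, 2/3), (2/3, 1/3)} : Set (ℝ × ℝ))) :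
    StrictMonoOn (fun r => hyperF a b (a + b) r / hyperF (1/3) (2/3) 1 r)
      (Set.Ioo (0:ℝ) 1) := by
  have hstrict : 1/3 * (2/3) < a * b ∨ 1/3 * (2/3) * (a + b) < a * b * (1/3 + 2/3) := by
    by_contra! h
    exact hne (mem_pair_of_mul_eq_of_add_eq (by linarith) (by linarith))
  have := strictMonoOn_hyperF_div_hyperF_of_zeroBalanced ha hb (a' := 1/3) (b' := 2/3)
    (by norm_num) (by norm_num) (by linarith) (by linarith) hstrict
  rwa [show (1/3 : ℝ) + 2/3 = 1 by norm_num] at this
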